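/- Spherical Ceva theorem: if cevians AD, BE, CF of a spherical triangle ABC (with D on BC, E on CA, F on AB) meet at a common interior point, then (sin DB / sin DC) · (sin EC / sin EA) · (sin FA / sin FB) = 1. -/

import Mathlib

/-!
If `Y` lies on the minor arc `XZ` of the unit sphere, then
`sin XZ • Y = sin YZ • X + sin XY • Z`: the squared norm of the difference expands, via
`cos = ⟪·,·⟫` and the addition formulas for `XZ = XY + YZ`, to zero. Applied to `D` on `BC`
and `O` on `AD`, this writes a multiple of `O` in the basis `A, B, C` with `B`- and
`C`-coordinates in the ratio `sin DC : sin BD`. The cevians through `B` and `C` read off the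
other two ratios from the same coordinates `(x, y, z)`, so the product of the three ratios is
`(z/y)(x/z)(y/x) = 1`.
-/

open Real

noncomputable section

/-- Angular (great-circle) distance between two points of the unit sphere in `ℝ³`. -/
def sphDist (x y : EuclideanSpace ℝ (Fin 3)) : ℝ :=
  Real.arccos (inner ℝ x y)

/-- The unit sphere `S² ⊂ ℝ³`. -/
def unitSphere : Set (EuclideanSpace ℝ (Fin 3)) :=
  Metric.sphere (0 : EuclideanSpace ℝ (Fin 3)) 1

/-- `Y` lies strictly between `X` and `Z` on the minor great-circle arc `XZ`. -/
def SphBtw (X Y Z : EuclideanSpace ℝ (Fin 3)) : Prop :=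
  Y ≠ X ∧ Y ≠ Z ∧ sphDist X Y + sphDist Y Z = sphDist X Z

theorem LinearIndependent.eq_zero_of_smul_add_smul_add_smul_eq_zero {R M : Type*} [Ring R]
    [AddCommGroup M] [Module R M] {u v w : M} (h : LinearIndependent R ![u, v, w])
    {a b c : R} (habc : a • u + b • v + c • w = 0) : a = 0 ∧ b = 0 ∧ c = 0 := by
  have h0 := Fintype.linearIndependent_iff.mp h ![a, b, c] <| by
    simpa [Fin.sum_univ_three] using habc
  exact ⟨h0 0, h0 1, h0 2⟩

theorem LinearIndependent.rotate_fin_three {R M : Type*} [Ring R]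
    [AddCommGroup M] [Module R M] {u v w : M} (h : LinearIndependent R ![u, v, w]) :
    LinearIndependent R ![v, w, u] := by
  convert h.comp _ (finRotate 3).injective using 1
  ext i; fin_cases i <;> rfl

section

variable {X Y Z : EuclideanSpace ℝ (Fin 3)}

theorem norm_eq_one_of_mem_unitSphere (hX : X ∈ unitSphere) : ‖X‖ = 1 :=
  mem_sphere_zero_iff_norm.mp hX

theorem sphDist_comm (X Y : EuclideanSpace ℝ (Fin 3)) : sphDist X Y = sphDist Y X := by
  rw [sphDist, sphDist, real_inner_comm]

theorem cos_sphDist (hX : X ∈ unitSphere) (hY : Y ∈ unitSphere) :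
    cos (sphDist X Y) = inner ℝ X Y := by
  have h := abs_real_inner_le_norm X Y
  rw [norm_eq_one_of_mem_unitSphere hX, norm_eq_one_of_mem_unitSphere hY, mul_one] at h
  exact cos_arccos (abs_le.mp h).1 (abs_le.mp h).2

theorem sphDist_le_pi (X Y : EuclideanSpace ℝ (Fin 3)) : sphDist X Y ≤ π :=
  arccos_le_pi _

theorem sphDist_pos (hX : X ∈ unitSphere) (hY : Y ∈ unitSphere) (hXY : X ≠ Y) :
    0 < sphDist X Y := by
  have hX1 := norm_eq_one_of_mem_unitSphere hX
  have hY1 := norm_eq_one_of_mem_unitSphere hY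
  have hle : inner ℝ X Y ≤ (1 : ℝ) := by simpa [hX1, hY1] using real_inner_le_norm X Y
  exact arccos_pos.mpr (hle.lt_of_ne (mt (inner_eq_one_iff_of_norm_eq_one hX1 hY1).mp hXY))

theorem SphBtw.sin_sphDist_pos_left (hX : X ∈ unitSphere) (hY : Y ∈ unitSphere)
    (hZ : Z ∈ unitSphere) (h : SphBtw X Y Z) : 0 < sin (sphDist X Y) := by
  obtain ⟨hYX, hYZ, hsum⟩ := h
  have hYZpos := sphDist_pos hY hZ hYZ
  exact sin_pos_of_pos_of_lt_pi (sphDist_pos hX hY hYX.symm) (by linarith [sphDist_le_pi X Z])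

theorem SphBtw.sin_sphDist_pos_right (hX : X ∈ unitSphere) (hY : Y ∈ unitSphere)
    (hZ : Z ∈ unitSphere) (h : SphBtw X Y Z) : 0 < sin (sphDist Y Z) := by
  obtain ⟨hYX, hYZ, hsum⟩ := h
  have hXYpos := sphDist_pos hX hY hYX.symm
  exact sin_pos_of_pos_of_lt_pi (sphDist_pos hY hZ hYZ) (by linarith [sphDist_le_pi X Z])

theorem sin_sphDist_smul_eq (hX : X ∈ unitSphere) (hY : Y ∈ unitSphere)
    (hZ : Z ∈ unitSphere) (h : sphDist X Y + sphDist Y Z = sphDist X Z) :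
    sin (sphDist X Z) • Y = sin (sphDist Y Z) • X + sin (sphDist X Y) • Z := by
  have hunit : ∀ {P : EuclideanSpace ℝ (Fin 3)}, P ∈ unitSphere →
      inner ℝ P P = (1 : ℝ) := fun hP => by
    rw [real_inner_self_eq_norm_sq, norm_eq_one_of_mem_unitSphere hP, one_pow]
  have hcos : ∀ {P Q : EuclideanSpace ℝ (Fin 3)}, P ∈ unitSphere → Q ∈ unitSphere →
      inner ℝ Q P = cos (sphDist P Q) := fun hP hQ => by
    rw [real_inner_comm, cos_sphDist hP hQ]
  rw [← sub_eq_zero, ← inner_self_eq_zero (𝕜 := ℝ)]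
  simp only [inner_sub_left, inner_sub_right, inner_add_left, inner_add_right,
    real_inner_smul_left, real_inner_smul_right, hunit hX, hunit hY, hunit hZ,
    ← cos_sphDist hX hY, ← cos_sphDist hY hZ, ← cos_sphDist hX hZ,
    hcos hX hY, hcos hY hZ, hcos hX hZ]
  rw [← h, sin_add, cos_add]
  linear_combination (-sin (sphDist X Y) ^ 2) * sin_sq_add_cos_sq (sphDist Y Z) -
    sin (sphDist Y Z) ^ 2 * sin_sq_add_cos_sq (sphDist X Y)

end

section

variable {A B C D O : EuclideanSpace ℝ (Fin 3)}

theorem smul_eq_of_cevian (hA : A ∈ unitSphere) (hB : B ∈ unitSphere) (hC : C ∈ unitSphere)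
    (hD : D ∈ unitSphere) (hO : O ∈ unitSphere) (hBDC : SphBtw B D C) (hAOD : SphBtw A O D) :
    (sin (sphDist B C) * sin (sphDist A D)) • O =
      (sin (sphDist B C) * sin (sphDist O D)) • A +
        (sin (sphDist A O) * sin (sphDist D C)) • B +
        (sin (sphDist A O) * sin (sphDist B D)) • C := by
  have hD' := sin_sphDist_smul_eq hB hD hC hBDC.2.2
  have hO' := sin_sphDist_smul_eq hA hO hD hAOD.2.2
  linear_combination (norm := module) sin (sphDist B C) • hO' + sin (sphDist A O) • hD'

theorem sin_mul_sin_ne_zero_of_cevian (hA : A ∈ unitSphere) (hB : B ∈ unitSphere)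
    (hC : C ∈ unitSphere) (hD : D ∈ unitSphere) (hO : O ∈ unitSphere)
    (hABC : LinearIndependent ℝ ![A, B, C]) (hBDC : SphBtw B D C) (hAOD : SphBtw A O D) :
    sin (sphDist B C) * sin (sphDist A D) ≠ 0 := by
  intro h0
  have hcomb := smul_eq_of_cevian hA hB hC hD hO hBDC hAOD
  rw [h0, zero_smul, eq_comm] at hcomb
  have hAO := hAOD.sin_sphDist_pos_left hA hO hD
  have hDC := hBDC.sin_sphDist_pos_right hB hD hC
  exact (mul_pos hAO hDC).ne' (hABC.eq_zero_of_smul_add_smul_add_smul_eq_zero hcomb).2.1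

theorem sin_mul_eq_sin_mul_of_cevian (hA : A ∈ unitSphere) (hB : B ∈ unitSphere)
    (hC : C ∈ unitSphere) (hD : D ∈ unitSphere) (hO : O ∈ unitSphere)
    (hABC : LinearIndependent ℝ ![A, B, C]) {t x y z : ℝ}
    (hxyz : t • O = x • A + y • B + z • C) (hBDC : SphBtw B D C) (hAOD : SphBtw A O D) :
    sin (sphDist B D) * y = sin (sphDist D C) * z := by
  have hcomb := smul_eq_of_cevian hA hB hC hD hO hBDC hAOD
  set s := sin (sphDist B C) * sin (sphDist A D)
  have hcoord : (t * (sin (sphDist B C) * sin (sphDist O D)) - s * x) • A +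
      (t * (sin (sphDist A O) * sin (sphDist D C)) - s * y) • B +
      (t * (sin (sphDist A O) * sin (sphDist B D)) - s * z) • C = 0 := by
    linear_combination (norm := module) s • hxyz - t • hcomb
  obtain ⟨-, hy, hz⟩ := hABC.eq_zero_of_smul_add_smul_add_smul_eq_zero hcoord
  apply mul_left_cancel₀ (sin_mul_sin_ne_zero_of_cevian hA hB hC hD hO hABC hBDC hAOD)
  linear_combination sin (sphDist D C) * hz - sin (sphDist B D) * hy

end

theorem spherical_ceva_general (A B C D E F O : EuclideanSpace ℝ (Fin 3))
    (hA : A ∈ unitSphere) (hB : B ∈ unitSphere) (hC : C ∈ unitSphere)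
    (hD' : D ∈ unitSphere) (hE' : E ∈ unitSphere) (hF' : F ∈ unitSphere)
    (hO' : O ∈ unitSphere)
    (hnd : LinearIndependent ℝ ![A, B, C])
    (hD : SphBtw B D C) (hE : SphBtw C E A) (hF : SphBtw A F B)
    (hOA : SphBtw A O D) (hOB : SphBtw B O E) (hOC : SphBtw C O F) :
    (Real.sin (sphDist D B) / Real.sin (sphDist D C)) *
      (Real.sin (sphDist E C) / Real.sin (sphDist E A)) *
      (Real.sin (sphDist F A) / Real.sin (sphDist F B)) = 1 := by
  have hcoord := smul_eq_of_cevian hA hB hC hD' hO' hD hOA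
  have hratioE := sin_mul_eq_sin_mul_of_cevian hB hC hA hE' hO' hnd.rotate_fin_three
    (by rw [hcoord]; abel) hE hOB
  have hratioF := sin_mul_eq_sin_mul_of_cevian hC hA hB hF' hO'
    hnd.rotate_fin_three.rotate_fin_three (by rw [hcoord]; abel) hF hOC
  have hBC : sin (sphDist B C) ≠ 0 :=
    left_ne_zero_of_mul (sin_mul_sin_ne_zero_of_cevian hA hB hC hD' hO' hnd hD hOA)
  have hOD := hOA.sin_sphDist_pos_right hA hO' hD'
  have hAO := hOA.sin_sphDist_pos_left hA hO' hD'
  have hDC := hD.sin_sphDist_pos_right hB hD' hC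
  have hEA := hE.sin_sphDist_pos_right hC hE' hA
  have hFB := hF.sin_sphDist_pos_right hA hF' hB
  rw [sphDist_comm D B, sphDist_comm E C, sphDist_comm F A]
  field_simp
  apply mul_left_cancel₀ (mul_ne_zero (mul_ne_zero hBC hOD.ne') hAO.ne')
  linear_combination sin (sphDist B C) * sin (sphDist O D) *
    (sin (sphDist A F) * hratioE + sin (sphDist E A) * hratioF)

/-- Spherical Ceva theorem: if the cevians `AD`, `BE`, `CF` of a spherical triangle
`ABC` contained in an open hemisphere meet at a common interior point `O`, then
`(sin DB / sin DC)(sin EC / sin EA)(sin FA / sin FB) = 1`. -/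
theorem spherical_ceva (A B C D E F O : EuclideanSpace ℝ (Fin 3))
    (hA : A ∈ unitSphere) (hB : B ∈ unitSphere) (hC : C ∈ unitSphere)
    (hD' : D ∈ unitSphere) (hE' : E ∈ unitSphere) (hF' : F ∈ unitSphere)
    (hO' : O ∈ unitSphere)
    (hhemi : ∃ n : EuclideanSpace ℝ (Fin 3),
      (0:ℝ) < inner ℝ n A ∧ (0:ℝ) < inner ℝ n B ∧ (0:ℝ) < inner ℝ n C ∧
      (0:ℝ) < inner ℝ n D ∧ (0:ℝ) < inner ℝ n E ∧ (0:ℝ) < inner ℝ n F ∧ (0:ℝ) < inner ℝ n O)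
    (hnd : LinearIndependent ℝ ![A, B, C])
    (hD : SphBtw B D C) (hE : SphBtw C E A) (hF : SphBtw A F B)
    (hOA : SphBtw A O D) (hOB : SphBtw B O E) (hOC : SphBtw C O F) :
    (Real.sin (sphDist D B) / Real.sin (sphDist D C)) *
      (Real.sin (sphDist E C) / Real.sin (sphDist E A)) *
      (Real.sin (sphDist F A) / Real.sin (sphDist F B)) = 1 :=
  spherical_ceva_general A B C D E F O hA hB hC hD' hE' hF' hO' hnd hD hE hF hOA hOB hOC

end
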